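/- Let g, u ∈ K⟦t⟧ with u having constant term 0, and let n ≥ 1. If u ≡ Y(g) (mod t^n), then N_g(u) ≡ Y(g) (mod t^{2n}), where N_g(u) = u - h(u)·∫(u'/h(u) - g) is the Newton operator. -/

import Mathlib

open PowerSeries

/-- Composition `h(u)` of formal power series, intended for `u` with zero constant term. -/
noncomputable def pcomp {R : Type*} [CommSemiring R] (h u : R⟦X⟧) : R⟦X⟧ :=
  PowerSeries.mk fun n => ∑ i ∈ Finset.range (n + 1), coeff i h * coeff n (u ^ i)

/-- Formal integral: the unique `F` with `F' = f` and `F(0) = 0`. -/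
noncomputable def pint {K : Type*} [Field K] (f : K⟦X⟧) : K⟦X⟧ :=
  PowerSeries.mk fun n => if n = 0 then 0 else coeff (n - 1) f / (n : K)

/-!
Write `v = u - y`, `H = h(u)` and `H_y = h(y)`. Since `v² ≡ 0 (mod t^{2n})`, Taylor expansion of
`h` at `y` gives `H ≡ H_y + h'(y)·v (mod t^{2n})`. Using `y' = g·H_y` and the chain rule
`H_y' = h'(y)·y'`, the derivative of `v/H_y - ∫(u'/H - g)` is, modulo `t^{2n}`, the product
`v · h'(y)/H_y · (u'/H - g)` of factors of orders `≥ n` and `≥ n - 1`. As `v/H_y - ∫(u'/H - g)`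
has zero constant term, it is therefore `≡ 0 (mod t^{2n})`. Finally
`N_g(u) - y = H_y·(v/H_y - ∫(u'/H - g)) - (H - H_y)·∫(u'/H - g)`,
and both `H - H_y` and `∫(u'/H - g)` are divisible by `t^n`.
-/

open scoped Polynomial

namespace Polynomial

theorem sq_sub_dvd_aeval_sub_aeval_sub {R A : Type*} [CommRing R] [CommRing A] [Algebra R A]
    (p : R[X]) (a b : A) :
    (a - b) ^ 2 ∣ aeval a p - aeval b p - aeval b (derivative p) * (a - b) := by
  obtain ⟨k, hk⟩ := binomExpansion (p.map (algebraMap R A)) b (a - b)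
  rw [add_sub_cancel, derivative_map, eval_map_algebraMap, eval_map_algebraMap,
    eval_map_algebraMap] at hk
  exact ⟨k, by rw [hk]; ring⟩

end Polynomial

namespace PowerSeries

section CommRing

variable {R : Type*} [CommRing R]

theorem X_pow_dvd_sub_iff {n : ℕ} {a b : R⟦X⟧} :
    X ^ n ∣ a - b ↔ ∀ i < n, coeff i a = coeff i b := by
  simp only [X_pow_dvd_iff, map_sub, sub_eq_zero]

theorem X_pow_dvd_sub_trunc (n : ℕ) (f : R⟦X⟧) : X ^ n ∣ f - (trunc n f : R⟦X⟧) :=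
  X_pow_dvd_sub_iff.mpr fun i hi => by rw [coeff_coe_trunc_of_lt hi]

theorem X_pow_dvd_derivative {n : ℕ} {f : R⟦X⟧} (h : X ^ (n + 1) ∣ f) :
    X ^ n ∣ d⁄dX R f := by
  rw [X_pow_dvd_iff] at h ⊢
  intro m hm
  rw [coeff_derivative, h (m + 1) (by omega), zero_mul]

theorem X_pow_dvd_subst {n : ℕ} {f w : R⟦X⟧} (hw : constantCoeff w = 0) (h : X ^ n ∣ f) :
    X ^ n ∣ f.subst w := by
  obtain ⟨g, rfl⟩ := h
  have hw' := HasSubst.of_constantCoeff_zero' hw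
  rw [subst_mul hw', subst_pow hw', subst_X hw']
  exact (pow_dvd_pow_of_dvd (X_dvd_iff.mpr hw) n).mul_right _

theorem X_pow_two_mul_dvd_subst_sub_subst_sub {n : ℕ} (f : R⟦X⟧) {u y : R⟦X⟧}
    (hu : constantCoeff u = 0) (hy : constantCoeff y = 0) (h : X ^ n ∣ u - y) :
    X ^ (2 * n) ∣ f.subst u - f.subst y - (d⁄dX R f).subst y * (u - y) := by
  have hu' := HasSubst.of_constantCoeff_zero' hu
  have hy' := HasSubst.of_constantCoeff_zero' hy
  obtain ⟨q, hq, hf⟩ :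
      ∃ q : R⟦X⟧, X ^ (2 * n + 1) ∣ q ∧ f = (trunc (2 * n + 1) f : R⟦X⟧) + q :=
    ⟨_, X_pow_dvd_sub_trunc _ f, (add_sub_cancel _ _).symm⟩
  generalize trunc (2 * n + 1) f = p at hf
  subst hf
  have hpoly : X ^ (2 * n) ∣ (p : R⟦X⟧).subst u - (p : R⟦X⟧).subst y
      - (d⁄dX R (p : R⟦X⟧)).subst y * (u - y) := by
    rw [subst_coe hu', subst_coe hy', derivative_coe, subst_coe hy', pow_mul']
    exact (pow_dvd_pow_of_dvd h 2).trans (p.sq_sub_dvd_aeval_sub_aeval_sub u y)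
  have hrem : X ^ (2 * n) ∣ q.subst u - q.subst y - (d⁄dX R q).subst y * (u - y) := by
    have hq' := (pow_dvd_pow X (Nat.le_succ _)).trans hq
    exact dvd_sub (dvd_sub (X_pow_dvd_subst hu hq') (X_pow_dvd_subst hy hq'))
      ((X_pow_dvd_subst hy (X_pow_dvd_derivative hq)).mul_right _)
  convert dvd_add hpoly hrem using 1
  rw [map_add, subst_add hu', subst_add hy', subst_add hy']
  ring

theorem X_pow_succ_dvd_of_derivative [IsAddTorsionFree R] {n : ℕ}
    {f : R⟦X⟧} (h0 : constantCoeff f = 0) (h : X ^ n ∣ d⁄dX R f) : X ^ (n + 1) ∣ f := by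
  rw [X_pow_dvd_iff] at h ⊢
  rintro (_ | m) hm
  · simpa using h0
  · have := h m (by omega)
    rw [coeff_derivative, ← Nat.cast_succ, mul_comm, ← nsmul_eq_mul] at this
    exact (nsmul_eq_zero_iff_right m.succ_ne_zero).mp this

end CommRing

theorem X_pow_dvd_inv_sub_inv {K : Type*} [Field K] {n : ℕ} {a b : K⟦X⟧}
    (ha : constantCoeff a ≠ 0) (hb : constantCoeff b ≠ 0) (h : X ^ n ∣ a - b) :
    X ^ n ∣ a⁻¹ - b⁻¹ := by
  have : a⁻¹ - b⁻¹ = -(a⁻¹ * b⁻¹ * (a - b)) := by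
    linear_combination b⁻¹ * PowerSeries.mul_inv_cancel a ha -
      a⁻¹ * PowerSeries.mul_inv_cancel b hb
  rw [this]
  exact (h.mul_left _).neg_right

end PowerSeries

theorem pcomp_eq_subst {R : Type*} [CommRing R] (h : R⟦X⟧) {w : R⟦X⟧}
    (hw : constantCoeff w = 0) :
    pcomp h w = h.subst w := by
  ext n
  rw [pcomp, coeff_mk, coeff_subst' (HasSubst.of_constantCoeff_zero' hw),
    finsum_eq_sum_of_support_subset (s := Finset.range (n + 1))]
  · simp only [smul_eq_mul]
  · refine Function.support_subset_iff'.mpr fun d hd => ?_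
    rw [Finset.coe_range, Set.mem_Iio, not_lt] at hd
    rw [X_pow_dvd_iff.mp (pow_dvd_pow_of_dvd (X_dvd_iff.mpr hw) d) n (by omega), smul_zero]

@[simp]
theorem constantCoeff_pcomp {R : Type*} [CommSemiring R] (h w : R⟦X⟧) :
    constantCoeff (pcomp h w) = constantCoeff h := by
  rw [← coeff_zero_eq_constantCoeff_apply, ← coeff_zero_eq_constantCoeff_apply, pcomp, coeff_mk]
  simp

@[simp]
theorem constantCoeff_pint {K : Type*} [Field K] (f : K⟦X⟧) : constantCoeff (pint f) = 0 := by
  rw [← coeff_zero_eq_constantCoeff_apply, pint, coeff_mk, if_pos rfl]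

@[simp]
theorem derivative_pint {K : Type*} [Field K] [CharZero K] (f : K⟦X⟧) :
    d⁄dX K (pint f) = f := by
  ext m
  rw [coeff_derivative, pint, coeff_mk, if_neg m.succ_ne_zero, Nat.add_sub_cancel]
  push_cast
  exact div_mul_cancel₀ _ (Nat.cast_add_one_ne_zero m)

section Newton

variable {K : Type*} [Field K] [CharZero K] {g u y H Hy T : K⟦X⟧} {n : ℕ}

theorem X_pow_two_mul_dvd_sub_pint (hn : 1 ≤ n) (hH : constantCoeff H ≠ 0)
    (hHy : constantCoeff Hy ≠ 0) (hy : d⁄dX K y = g * Hy) (hHy' : d⁄dX K Hy = T * d⁄dX K y)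
    (hv : X ^ n ∣ u - y) (hHH : X ^ n ∣ H - Hy)
    (htaylor : X ^ (2 * n) ∣ H - Hy - T * (u - y)) :
    X ^ (2 * n) ∣ (u - y) * Hy⁻¹ - pint (d⁄dX K u * H⁻¹ - g) := by
  have hHyJ := PowerSeries.mul_inv_cancel Hy hHy
  have hHI := PowerSeries.mul_inv_cancel H hH
  have hintegrand : X ^ (n - 1) ∣ d⁄dX K u * H⁻¹ - g := by
    have hu' : X ^ (n - 1) ∣ d⁄dX K u - d⁄dX K y := by
      rw [← map_sub]
      exact X_pow_dvd_derivative (by rwa [Nat.sub_add_cancel hn])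
    have hI : X ^ (n - 1) ∣ H⁻¹ - Hy⁻¹ :=
      (pow_dvd_pow X (n.sub_le 1)).trans (X_pow_dvd_inv_sub_inv hH hHy hHH)
    have : d⁄dX K u * H⁻¹ - g
        = (d⁄dX K u - d⁄dX K y) * H⁻¹ + d⁄dX K y * (H⁻¹ - Hy⁻¹) := by
      linear_combination Hy⁻¹ * hy + g * hHyJ
    rw [this]
    exact dvd_add (hu'.mul_right _) (hI.mul_left _)
  have hderiv : d⁄dX K ((u - y) * Hy⁻¹ - pint (d⁄dX K u * H⁻¹ - g))
      = (u - y) * T * Hy⁻¹ * (d⁄dX K u * H⁻¹ - g)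
        + d⁄dX K u * H⁻¹ * Hy⁻¹ * (H - Hy - T * (u - y)) := by
    rw [map_sub, Derivation.leibniz, derivative_inv', derivative_pint, hHy', map_sub,
      smul_eq_mul, smul_eq_mul]
    linear_combination (-(u - y) * Hy⁻¹ ^ 2 * T - Hy⁻¹) * hy
      - ((u - y) * T * Hy⁻¹ * g + g - d⁄dX K u * H⁻¹) * hHyJ - d⁄dX K u * Hy⁻¹ * hHI
  have h0 : constantCoeff ((u - y) * Hy⁻¹ - pint (d⁄dX K u * H⁻¹ - g)) = 0 := by
    have : constantCoeff (u - y) = 0 := X_dvd_iff.mp ((dvd_pow_self X (by omega)).trans hv)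
    simp [this]
  obtain ⟨m, hm⟩ : ∃ m, 2 * n = m + 1 := ⟨2 * n - 1, by omega⟩
  rw [hm] at htaylor ⊢
  refine X_pow_succ_dvd_of_derivative h0 ?_
  rw [hderiv]
  refine dvd_add ?_ (((pow_dvd_pow X m.le_succ).trans htaylor).mul_left _)
  rw [show m = n + (n - 1) by omega, pow_add]
  exact (mul_dvd_mul hv hintegrand).trans (Dvd.intro (T * Hy⁻¹) (by ring))

theorem X_pow_two_mul_dvd_newton_sub (hn : 1 ≤ n) (hH : constantCoeff H ≠ 0)
    (hHy : constantCoeff Hy ≠ 0) (hy : d⁄dX K y = g * Hy) (hHy' : d⁄dX K Hy = T * d⁄dX K y)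
    (hv : X ^ n ∣ u - y) (htaylor : X ^ (2 * n) ∣ H - Hy - T * (u - y)) :
    X ^ (2 * n) ∣ u - H * pint (d⁄dX K u * H⁻¹ - g) - y := by
  have hHH : X ^ n ∣ H - Hy := by
    have := dvd_add ((pow_dvd_pow X (by omega : n ≤ 2 * n)).trans htaylor) (hv.mul_left T)
    rwa [sub_add_cancel] at this
  set E := pint (d⁄dX K u * H⁻¹ - g)
  have hE := X_pow_two_mul_dvd_sub_pint hn hH hHy hy hHy' hv hHH htaylor
  have hEn : X ^ n ∣ E := by
    have := dvd_sub (hv.mul_right Hy⁻¹) ((pow_dvd_pow X (by omega : n ≤ 2 * n)).trans hE)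
    rwa [sub_sub_cancel] at this
  have : u - H * E - y = Hy * ((u - y) * Hy⁻¹ - E) - (H - Hy) * E := by
    linear_combination -(u - y) * PowerSeries.mul_inv_cancel Hy hHy
  rw [this]
  refine dvd_sub (hE.mul_left _) ?_
  rw [two_mul, pow_add]
  exact mul_dvd_mul hHH hEn

end Newton

theorem stmt1 {K : Type*} [Field K] [CharZero K] (g h u y : K⟦X⟧)
    (hh : constantCoeff h = 1) (hu : constantCoeff u = 0)
    (hy0 : constantCoeff y = 0) (hy : derivativeFun y = g * pcomp h y)
    (n : ℕ) (hn : 1 ≤ n)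
    (hcong : ∀ i < n, coeff i u = coeff i y) :
    ∀ i < 2 * n,
      coeff i (u - pcomp h u * pint (derivativeFun u * (pcomp h u)⁻¹ - g)) = coeff i y := by
  have hunit : ∀ w, constantCoeff (pcomp h w) ≠ 0 := fun w => by simp [hh]
  have hchain : d⁄dX K (pcomp h y) = pcomp (d⁄dX K h) y * d⁄dX K y := by
    rw [pcomp_eq_subst _ hy0, pcomp_eq_subst _ hy0,
      derivative_subst (HasSubst.of_constantCoeff_zero' hy0)]
  have hv : X ^ n ∣ u - y := X_pow_dvd_sub_iff.mpr hcong
  have htaylor : X ^ (2 * n) ∣ pcomp h u - pcomp h y - pcomp (d⁄dX K h) y * (u - y) := by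
    simpa only [pcomp_eq_subst _ hu, pcomp_eq_subst _ hy0] using
      X_pow_two_mul_dvd_subst_sub_subst_sub h hu hy0 hv
  exact X_pow_dvd_sub_iff.mp
    (X_pow_two_mul_dvd_newton_sub hn (hunit u) (hunit y) hy hchain hv htaylor)
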